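/- arXiv:2505.10777 — 4 statements merged into one kernel-verified Lean document; each statement's English description precedes it below -/
import Mathlib

section
/- Let p ≥ 5 be a prime. For two primitive pairs v = (x,y) and v' = (x',y') in ℤ², there exists a matrix γ ∈ Γ(p) with γ·v = v' if and only if x ≡ x' (mod p) and y ≡ y' (mod p). -/
/-- A pair `(x, y) ∈ ℤ²` is primitive if `gcd(x, y) = 1`. -/
def Primitive (v : ℤ × ℤ) : Prop := IsCoprime v.1 v.2

/-- Let `p ≥ 5` be a prime. For two primitive pairs `v = (x,y)` and
`v' = (x',y')` in `ℤ²`, there exists a matrix `γ ∈ Γ(p)` with `γ·v = v'` if and only if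
`x ≡ x' (mod p)` and `y ≡ y' (mod p)`. -/
theorem stmt_0 (p : ℕ) (hp : p.Prime) (hp5 : 5 ≤ p)
    (x y x' y' : ℤ) (hv : Primitive (x, y)) (hv' : Primitive (x', y')) :
    (∃ a b c d : ℤ, a * d - b * c = 1 ∧
        a ≡ 1 [ZMOD (p : ℤ)] ∧ b ≡ 0 [ZMOD (p : ℤ)] ∧
        c ≡ 0 [ZMOD (p : ℤ)] ∧ d ≡ 1 [ZMOD (p : ℤ)] ∧
        a * x + b * y = x' ∧ c * x + d * y = y') ↔
      (x ≡ x' [ZMOD (p : ℤ)] ∧ y ≡ y' [ZMOD (p : ℤ)]) := by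
  constructor
  · rintro ⟨a, b, c, d, _, ha, hb, hc, hd, hax, hcy⟩
    constructor
    · calc x = 1 * x + 0 * y := by ring
        _ ≡ a * x + b * y [ZMOD (p : ℤ)] :=
          Int.ModEq.add (ha.symm.mul_right x) (hb.symm.mul_right y)
        _ = x' := hax
    · calc y = 0 * x + 1 * y := by ring
        _ ≡ c * x + d * y [ZMOD (p : ℤ)] :=
          Int.ModEq.add (hc.symm.mul_right x) (hd.symm.mul_right y)
        _ = y' := hcy
  · rintro ⟨hx, hy⟩
    obtain ⟨d₀, v₀, h₀⟩ := hv
    obtain ⟨d₁, v₁, h₁⟩ := hv'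
    -- h₀ : d₀ * x + v₀ * y = 1 ; set b₀ = -v₀ so x*d₀ - b₀*y = 1
    set b₀ : ℤ := -v₀ with hb₀
    set b₁ : ℤ := -v₁ with hb₁
    have h0 : x * d₀ - b₀ * y = 1 := by simp only [hb₀]; linarith [h₀]
    have h1 : x' * d₁ - b₁ * y' = 1 := by simp only [hb₁]; linarith [h₁]
    set t : ℤ := d₁ * b₀ - b₁ * d₀ with ht
    refine ⟨x' * d₀ - x' * t * y - b₁ * y,
            -x' * b₀ + x' * t * x + b₁ * x,
            y' * d₀ - y' * t * y - d₁ * y,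
            -y' * b₀ + y' * t * x + d₁ * x, ?_, ?_, ?_, ?_, ?_, ?_, ?_⟩
    · linear_combination (x * d₀ - b₀ * y) * h1 + h0
    · -- a ≡ 1 mod p
      have : ((x' * d₀ - x' * t * y - b₁ * y : ℤ) : ZMod p) = ((1 : ℤ) : ZMod p) := by
        have hxz : ((x' : ℤ) : ZMod p) = ((x : ℤ) : ZMod p) :=
          (ZMod.intCast_eq_intCast_iff _ _ _).mpr hx.symm
        have hyz : ((y' : ℤ) : ZMod p) = ((y : ℤ) : ZMod p) :=
          (ZMod.intCast_eq_intCast_iff _ _ _).mpr hy.symm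
        have h0z : ((x : ℤ) : ZMod p) * d₀ - b₀ * y = 1 := by
          have := congrArg (fun z : ℤ => (z : ZMod p)) h0; push_cast at this ⊢; exact this
        have h1z : ((x' : ℤ) : ZMod p) * d₁ - b₁ * y' = 1 := by
          have := congrArg (fun z : ℤ => (z : ZMod p)) h1; push_cast at this ⊢; exact this
        rw [hxz, hyz] at h1z
        push_cast
        rw [hxz, ht]
        push_cast
        linear_combination (1 + (b₁ : ZMod p) * y) * h0z - (b₀ : ZMod p) * y * h1z
      exact (ZMod.intCast_eq_intCast_iff _ _ _).mp this
    · have : ((-x' * b₀ + x' * t * x + b₁ * x : ℤ) : ZMod p) = ((0 : ℤ) : ZMod p) := by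
        have hxz : ((x' : ℤ) : ZMod p) = ((x : ℤ) : ZMod p) :=
          (ZMod.intCast_eq_intCast_iff _ _ _).mpr hx.symm
        have hyz : ((y' : ℤ) : ZMod p) = ((y : ℤ) : ZMod p) :=
          (ZMod.intCast_eq_intCast_iff _ _ _).mpr hy.symm
        have h0z : ((x : ℤ) : ZMod p) * d₀ - b₀ * y = 1 := by
          have := congrArg (fun z : ℤ => (z : ZMod p)) h0; push_cast at this ⊢; exact this
        have h1z : ((x' : ℤ) : ZMod p) * d₁ - b₁ * y' = 1 := by
          have := congrArg (fun z : ℤ => (z : ZMod p)) h1; push_cast at this ⊢; exact this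
        rw [hxz, hyz] at h1z
        push_cast
        rw [hxz, ht]
        push_cast
        linear_combination (x : ZMod p) * b₀ * h1z - (x : ZMod p) * b₁ * h0z
      exact (ZMod.intCast_eq_intCast_iff _ _ _).mp this
    · have : ((y' * d₀ - y' * t * y - d₁ * y : ℤ) : ZMod p) = ((0 : ℤ) : ZMod p) := by
        have hxz : ((x' : ℤ) : ZMod p) = ((x : ℤ) : ZMod p) :=
          (ZMod.intCast_eq_intCast_iff _ _ _).mpr hx.symm
        have hyz : ((y' : ℤ) : ZMod p) = ((y : ℤ) : ZMod p) :=
          (ZMod.intCast_eq_intCast_iff _ _ _).mpr hy.symm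
        have h0z : ((x : ℤ) : ZMod p) * d₀ - b₀ * y = 1 := by
          have := congrArg (fun z : ℤ => (z : ZMod p)) h0; push_cast at this ⊢; exact this
        have h1z : ((x' : ℤ) : ZMod p) * d₁ - b₁ * y' = 1 := by
          have := congrArg (fun z : ℤ => (z : ZMod p)) h1; push_cast at this ⊢; exact this
        rw [hxz, hyz] at h1z
        push_cast
        rw [hyz, ht]
        push_cast
        linear_combination (y : ZMod p) * d₁ * h0z - (y : ZMod p) * d₀ * h1z
      exact (ZMod.intCast_eq_intCast_iff _ _ _).mp this
    · have : ((-y' * b₀ + y' * t * x + d₁ * x : ℤ) : ZMod p) = ((1 : ℤ) : ZMod p) := by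
        have hxz : ((x' : ℤ) : ZMod p) = ((x : ℤ) : ZMod p) :=
          (ZMod.intCast_eq_intCast_iff _ _ _).mpr hx.symm
        have hyz : ((y' : ℤ) : ZMod p) = ((y : ℤ) : ZMod p) :=
          (ZMod.intCast_eq_intCast_iff _ _ _).mpr hy.symm
        have h0z : ((x : ℤ) : ZMod p) * d₀ - b₀ * y = 1 := by
          have := congrArg (fun z : ℤ => (z : ZMod p)) h0; push_cast at this ⊢; exact this
        have h1z : ((x' : ℤ) : ZMod p) * d₁ - b₁ * y' = 1 := by
          have := congrArg (fun z : ℤ => (z : ZMod p)) h1; push_cast at this ⊢; exact this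
        rw [hxz, hyz] at h1z
        push_cast
        rw [hyz, ht]
        push_cast
        linear_combination (1 + (b₀ : ZMod p) * y) * h1z - (b₁ : ZMod p) * y * h0z
      exact (ZMod.intCast_eq_intCast_iff _ _ _).mp this
    · linear_combination x' * h0
    · linear_combination y' * h0
end

section
/- Let p ≥ 5 be a prime. Two primitive pairs (x,y) and (x',y') in ℤ² are Γ₁(p)-cusp-equivalent if and only if there exists j ∈ ℤ such that either (x',y') ≡ (x + j·y, y) (mod p) or (x',y') ≡ (−x − j·y, −y) (mod p). -/
/-- Two pairs `v, w` are `Γ₁(p)`-cusp-equivalent if `w = γ·v` or `w = -γ·v` for some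
`γ = (a b; c d) ∈ SL₂(ℤ)` with `c ≡ 0` and `d ≡ 1 (mod p)`. -/
def Gamma1CuspEquiv (p : ℕ) (v w : ℤ × ℤ) : Prop :=
  ∃ a b c d : ℤ, a * d - b * c = 1 ∧
    c ≡ 0 [ZMOD (p : ℤ)] ∧ d ≡ 1 [ZMOD (p : ℤ)] ∧
    ((a * v.1 + b * v.2, c * v.1 + d * v.2) = w ∨
      (-(a * v.1 + b * v.2), -(c * v.1 + d * v.2)) = w)

/-- Key transitivity lemma: if two primitive vectors are congruent mod `p`, then some
matrix in `Γ(p)` (in particular `Γ₁(p)`) carries one to the other. -/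
lemma gammaP_transitive (p : ℕ) (hp : p.Prime) (x y x' y' : ℤ)
    (h : IsCoprime x y) (h' : IsCoprime x' y')
    (hx : x' ≡ x [ZMOD (p : ℤ)]) (hy : y' ≡ y [ZMOD (p : ℤ)]) :
    ∃ a b c d : ℤ, a * d - b * c = 1 ∧
      c ≡ 0 [ZMOD (p : ℤ)] ∧ d ≡ 1 [ZMOD (p : ℤ)] ∧
      a * x + b * y = x' ∧ c * x + d * y = y' := by
  haveI : Fact p.Prime := ⟨hp⟩
  obtain ⟨r, s, hrs⟩ := h
  obtain ⟨r', s', hrs'⟩ := h'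
  -- cast hypotheses to ZMod p
  have hxc : ((x' : ℤ) : ZMod p) = (x : ZMod p) := (ZMod.intCast_eq_intCast_iff _ _ _).mpr hx
  have hyc : ((y' : ℤ) : ZMod p) = (y : ZMod p) := (ZMod.intCast_eq_intCast_iff _ _ _).mpr hy
  have e1 : (r : ZMod p) * (x : ZMod p) + (s : ZMod p) * (y : ZMod p) = 1 := by
    have := congrArg (fun z : ℤ => (z : ZMod p)) hrs
    push_cast at this
    exact this
  have e2 : (r' : ZMod p) * (x : ZMod p) + (s' : ZMod p) * (y : ZMod p) = 1 := by
    have := congrArg (fun z : ℤ => (z : ZMod p)) hrs'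
    push_cast at this
    rw [hxc, hyc] at this
    exact this
  have hrel : (x : ZMod p) * ((r : ZMod p) - r') = (y : ZMod p) * ((s' : ZMod p) - s) := by
    linear_combination e1 - e2
  -- find u with x*u = s'-s and y*u = r-r'
  obtain ⟨u, hu1, hu2⟩ : ∃ u : ZMod p, (x : ZMod p) * u = (s' : ZMod p) - s ∧
      (y : ZMod p) * u = (r : ZMod p) - r' := by
    by_cases hx0 : (x : ZMod p) = 0
    · have hy0 : (y : ZMod p) ≠ 0 := by
        intro h0
        rw [hx0, h0] at e1
        simp at e1
      refine ⟨((r : ZMod p) - r') * (y : ZMod p)⁻¹, ?_, ?_⟩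
      · have hss : (s' : ZMod p) - s = 0 := by
          have := hrel
          rw [hx0, zero_mul] at this
          exact (mul_eq_zero.mp this.symm).resolve_left hy0
        rw [hx0, hss, zero_mul]
      · field_simp
    · refine ⟨((s' : ZMod p) - s) * (x : ZMod p)⁻¹, ?_, ?_⟩
      · field_simp
      · have hxx : (x : ZMod p) * (x : ZMod p)⁻¹ = 1 := mul_inv_cancel₀ hx0
        linear_combination (-(x : ZMod p)⁻¹) * hrel + ((r : ZMod p) - (r' : ZMod p)) * hxx
  -- lift u to an integer t
  set t : ℤ := (u.val : ℤ) with ht_def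
  have ht : ((t : ℤ) : ZMod p) = u := by
    rw [ht_def]
    push_cast
    rw [ZMod.natCast_val, ZMod.cast_id]
  -- the matrix
  refine ⟨x' * r - (x' * t - s') * y, x' * s + (x' * t - s') * x,
    y' * r - (y' * t + r') * y, y' * s + (y' * t + r') * x, ?_, ?_, ?_, ?_, ?_⟩
  · linear_combination (x' * (y' * t + r') - (x' * t - s') * y') * hrs + hrs'
  · have hc : ((y' * r - (y' * t + r') * y : ℤ) : ZMod p) = ((0 : ℤ) : ZMod p) := by
      push_cast
      rw [hyc, ht]
      linear_combination (-(y : ZMod p)) * hu2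
    exact (ZMod.intCast_eq_intCast_iff _ _ _).mp hc
  · have hd : ((y' * s + (y' * t + r') * x : ℤ) : ZMod p) = ((1 : ℤ) : ZMod p) := by
      push_cast
      rw [hyc, ht]
      linear_combination (x : ZMod p) * hu2 + e1
    exact (ZMod.intCast_eq_intCast_iff _ _ _).mp hd
  · linear_combination x' * hrs
  · linear_combination y' * hrs

/-- Let `p ≥ 5` be a prime. Two primitive pairs `(x,y)` and `(x',y')` in `ℤ²`
are `Γ₁(p)`-cusp-equivalent if and only if there exists `j ∈ ℤ` such that either
`(x',y') ≡ (x + j·y, y) (mod p)` or `(x',y') ≡ (−x − j·y, −y) (mod p)`. -/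
theorem stmt_2 (p : ℕ) (hp : p.Prime) (hp5 : 5 ≤ p)
    (x y x' y' : ℤ) (hv : Primitive (x, y)) (hv' : Primitive (x', y')) :
    Gamma1CuspEquiv p (x, y) (x', y') ↔
      ∃ j : ℤ, (x' ≡ x + j * y [ZMOD (p : ℤ)] ∧ y' ≡ y [ZMOD (p : ℤ)]) ∨
        (x' ≡ -x - j * y [ZMOD (p : ℤ)] ∧ y' ≡ -y [ZMOD (p : ℤ)]) := by
  haveI : Fact p.Prime := ⟨hp⟩
  constructor
  · rintro ⟨a, b, c, d, hdet, hc, hd, heq | heq⟩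
    all_goals
      rw [Prod.ext_iff] at heq
      obtain ⟨h1, h2⟩ := heq
      simp only at h1 h2
      have hc' : ((c : ℤ) : ZMod p) = 0 := by
        have := (ZMod.intCast_eq_intCast_iff _ _ _).mpr hc
        simpa using this
      have hd' : ((d : ℤ) : ZMod p) = 1 := by
        have := (ZMod.intCast_eq_intCast_iff _ _ _).mpr hd
        simpa using this
      have hdet' : (a : ZMod p) * (d : ZMod p) - (b : ZMod p) * (c : ZMod p) = 1 := by
        have := congrArg (fun z : ℤ => (z : ZMod p)) hdet
        push_cast at this
        exact this
      have ha' : (a : ZMod p) = 1 := by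
        rw [hc', hd'] at hdet'
        simpa using hdet'
      refine ⟨b, ?_⟩
    · left
      constructor
      · rw [← ZMod.intCast_eq_intCast_iff]
        rw [← h1]
        push_cast
        rw [ha']
        ring
      · rw [← ZMod.intCast_eq_intCast_iff]
        rw [← h2]
        push_cast
        rw [hc', hd']
        ring
    · right
      constructor
      · rw [← ZMod.intCast_eq_intCast_iff]
        rw [← h1]
        push_cast
        rw [ha']
        ring
      · rw [← ZMod.intCast_eq_intCast_iff]
        rw [← h2]
        push_cast
        rw [hc', hd']
        ring
  · rintro ⟨j, ⟨hx1, hy1⟩ | ⟨hx1, hy1⟩⟩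
    · have hcop : IsCoprime (x + j * y) y := by
        have := (hv : IsCoprime x y).add_mul_left_left j
        simpa [mul_comm] using this
      obtain ⟨a, b, c, d, hdet, hc0, hd1, h1, h2⟩ :=
        gammaP_transitive p hp (x + j * y) y x' y' hcop hv' hx1 hy1
      refine ⟨a, a * j + b, c, c * j + d, by linear_combination hdet, hc0, ?_, Or.inl ?_⟩
      · simpa using (hc0.mul_right j).add hd1
      · simp only [Prod.mk.injEq]
        exact ⟨by linear_combination h1, by linear_combination h2⟩
    · have hcop : IsCoprime (x + j * y) y := by
        have := (hv : IsCoprime x y).add_mul_left_left j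
        simpa [mul_comm] using this
      have hcop' : IsCoprime (-x') (-y') := (hv' : IsCoprime x' y').neg_left.neg_right
      have hx2 : -x' ≡ x + j * y [ZMOD (p : ℤ)] := by
        have h3 : -(-x - j * y) = x + j * y := by ring
        exact h3 ▸ hx1.neg
      have hy2 : -y' ≡ y [ZMOD (p : ℤ)] := by
        have h3 : -(-y) = y := by ring
        exact h3 ▸ hy1.neg
      obtain ⟨a, b, c, d, hdet, hc0, hd1, h1, h2⟩ :=
        gammaP_transitive p hp (x + j * y) y (-x') (-y') hcop hcop' hx2 hy2
      refine ⟨a, a * j + b, c, c * j + d, by linear_combination hdet, hc0, ?_, Or.inr ?_⟩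
      · simpa using (hc0.mul_right j).add hd1
      · simp only [Prod.mk.injEq]
        exact ⟨by linear_combination -h1, by linear_combination -h2⟩
end

section
/- Let p ≥ 5 be a prime. The pairs (x, p) for 1 ≤ x ≤ (p−1)/2 together with the pairs (1, y) for 1 ≤ y ≤ (p−1)/2 form a complete and irredundant set of representatives for the Γ₁(p)-cusp-equivalence classes of primitive pairs: every primitive pair in ℤ² is Γ₁(p)-cusp-equivalent to exactly one pair from this list. -/
section Aux

lemma int_prime (p : ℕ) (hp : p.Prime) : Prime (p : ℤ) := by
  rw [Int.prime_iff_natAbs_prime]; simpa using hp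

lemma coprime_of_not_dvd (p : ℕ) (hp : p.Prime) (x : ℤ) (h : ¬ (p : ℤ) ∣ x) :
    IsCoprime x (p : ℤ) :=
  (((int_prime p hp).coprime_iff_not_dvd).mpr h).symm

/-- Equivalence is stable under negating the target. -/
lemma Gamma1CuspEquiv.neg {p : ℕ} {v : ℤ × ℤ} {x y : ℤ}
    (h : Gamma1CuspEquiv p v (x, y)) : Gamma1CuspEquiv p v (-x, -y) := by
  obtain ⟨a, b, c, d, hdet, hc, hd, hor⟩ := h
  refine ⟨a, b, c, d, hdet, hc, hd, ?_⟩
  rcases hor with h1 | h1 <;> simp only [Prod.mk.injEq] at h1 ⊢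
  · right; constructor <;> omega
  · left; constructor <;> omega

/-- Key existence lemma: if `y' ≡ y (mod p)` and (in the case `p ∣ y`) `x' ≡ x (mod p)`,
then the primitive pairs `(x,y)` and `(x',y')` are `Γ₁(p)`-cusp-equivalent. -/
lemma key_equiv (p : ℕ) (hp : p.Prime) (x y x' y' : ℤ)
    (hv : IsCoprime x y) (hw : IsCoprime x' y')
    (h2 : y' ≡ y [ZMOD (p : ℤ)]) (h1 : (p : ℤ) ∣ y → x' ≡ x [ZMOD (p : ℤ)]) :
    Gamma1CuspEquiv p (x, y) (x', y') := by
  obtain ⟨β, nα, hA0⟩ := hv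
  obtain ⟨β', nα', hB0⟩ := hw
  set α : ℤ := -nα with hαdef
  set α' : ℤ := -nα' with hα'def
  have hA : x * β - α * y = 1 := by rw [hαdef]; linarith [hA0]
  have hB : x' * β' - α' * y' = 1 := by rw [hα'def]; linarith [hB0]
  have hy' : ((y' : ZMod p)) = (y : ZMod p) := by
    rw [ZMod.intCast_eq_intCast_iff]; exact h2
  by_cases hdvd : (p : ℤ) ∣ y
  · -- case p ∣ y : take j = 0
    have hy0 : ((y : ZMod p)) = 0 := (ZMod.intCast_zmod_eq_zero_iff_dvd y p).mpr hdvd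
    have hy'0 : ((y' : ZMod p)) = 0 := hy'.trans hy0
    have hx : ((x' : ZMod p)) = (x : ZMod p) := by
      rw [ZMod.intCast_eq_intCast_iff]; exact h1 hdvd
    have hBZ : (x' : ZMod p) * β' - α' * y' = 1 := by
      have := congrArg (Int.cast : ℤ → ZMod p) hB
      push_cast at this; exact this
    refine ⟨x' * β - α' * y, -x' * α + α' * x, y' * β - β' * y, -y' * α + β' * x,
      ?_, ?_, ?_, Or.inl ?_⟩
    · linear_combination (x' * β' - α' * y') * hA + hB
    · rw [show ((0:ℤ)) = ((0:ℤ)) from rfl, ← ZMod.intCast_eq_intCast_iff]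
      push_cast
      linear_combination (β : ZMod p) * hy'0 + (-(β' : ZMod p)) * hy0
    · rw [← ZMod.intCast_eq_intCast_iff]
      push_cast
      rw [← hx]
      linear_combination ((α' : ZMod p) - α) * hy'0 + hBZ
    · have e1 : (x' * β - α' * y) * x + (-x' * α + α' * x) * y = x' := by
        linear_combination x' * hA
      have e2 : (y' * β - β' * y) * x + (-y' * α + β' * x) * y = y' := by
        linear_combination y' * hA
      simp only [Prod.mk.injEq]; exact ⟨e1, e2⟩
  · -- case p ∤ y : choose j with j*y ≡ β - β' (mod p)
    obtain ⟨u, w0, huw⟩ := coprime_of_not_dvd p hp y hdvd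
    set j : ℤ := u * (β - β') with hjdef
    have hjy : j * y ≡ β - β' [ZMOD (p : ℤ)] := by
      rw [Int.modEq_iff_dvd]
      exact ⟨(β - β') * w0, by rw [hjdef]; linear_combination (β' - β) * huw⟩
    have hjZ : (j : ZMod p) * y = (β : ZMod p) - β' := by
      have := (ZMod.intCast_eq_intCast_iff _ _ _).mpr hjy
      push_cast at this; exact this
    have hAZ : (x : ZMod p) * β - α * y = 1 := by
      have := congrArg (Int.cast : ℤ → ZMod p) hA
      push_cast at this; exact this
    refine ⟨x' * β - (j * x' + α') * y, -x' * α + (j * x' + α') * x,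
      y' * β - (j * y' + β') * y, -y' * α + (j * y' + β') * x,
      ?_, ?_, ?_, Or.inl ?_⟩
    · linear_combination (x' * β' - α' * y') * hA + hB
    · rw [← ZMod.intCast_eq_intCast_iff]
      push_cast
      rw [hy']
      linear_combination (-(y : ZMod p)) * hjZ
    · rw [← ZMod.intCast_eq_intCast_iff]
      push_cast
      rw [hy']
      linear_combination (x : ZMod p) * hjZ + hAZ
    · have e1 : (x' * β - (j * x' + α') * y) * x + (-x' * α + (j * x' + α') * x) * y = x' := by
        linear_combination x' * hA
      have e2 : (y' * β - (j * y' + β') * y) * x + (-y' * α + (j * y' + β') * x) * y = y' := by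
        linear_combination y' * hA
      simp only [Prod.mk.injEq]; exact ⟨e1, e2⟩

/-- The invariant: an equivalence preserves the second coordinate mod `p` up to sign,
and if `v.2 ≡ 0` it also preserves the first coordinate mod `p` (with the same sign). -/
lemma invariant (p : ℕ) (v w : ℤ × ℤ) (h : Gamma1CuspEquiv p v w) :
    ∃ σ : ZMod p, (σ = 1 ∨ σ = -1) ∧ ((w.2 : ZMod p)) = σ * (v.2 : ZMod p) ∧
      (((v.2 : ZMod p)) = 0 → ((w.1 : ZMod p)) = σ * (v.1 : ZMod p)) := by
  obtain ⟨a, b, c, d, hdet, hc, hd, hor⟩ := h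
  have hcZ : ((c : ZMod p)) = 0 := by
    have := (ZMod.intCast_eq_intCast_iff _ _ _).mpr hc; push_cast at this; exact this
  have hdZ : ((d : ZMod p)) = 1 := by
    have := (ZMod.intCast_eq_intCast_iff _ _ _).mpr hd; push_cast at this; exact this
  have hdetZ : (a : ZMod p) * d - b * c = 1 := by
    have := congrArg (Int.cast : ℤ → ZMod p) hdet; push_cast at this; exact this
  have haZ : ((a : ZMod p)) = 1 := by
    linear_combination hdetZ + (-(a : ZMod p)) * hdZ + (b : ZMod p) * hcZ
  rcases hor with h1 | h1
  · refine ⟨1, Or.inl rfl, ?_, ?_⟩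
    · rw [← h1]; push_cast
      linear_combination (v.1 : ZMod p) * hcZ + (v.2 : ZMod p) * hdZ
    · intro hy0
      rw [← h1]; push_cast
      linear_combination (v.1 : ZMod p) * haZ + (b : ZMod p) * hy0
  · refine ⟨-1, Or.inr rfl, ?_, ?_⟩
    · rw [← h1]; push_cast
      linear_combination (-(v.1 : ZMod p)) * hcZ + (-(v.2 : ZMod p)) * hdZ
    · intro hy0
      rw [← h1]; push_cast
      linear_combination (-(v.1 : ZMod p)) * haZ + (-(b : ZMod p)) * hy0

/-- Two representatives in the range `[1, (p-1)/2]` that agree mod `p` up to sign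
are equal. -/
lemma range_lemma (p : ℕ) (m a b : ℤ) (hm : (p : ℤ) = 2 * m + 1)
    (ha1 : 1 ≤ a) (ha2 : a ≤ m) (hb1 : 1 ≤ b) (hb2 : b ≤ m)
    (h : ((a : ZMod p)) = (b : ZMod p) ∨ ((a : ZMod p)) = -(b : ZMod p)) : a = b := by
  rcases h with h | h
  · have hd : (p : ℤ) ∣ b - a := by
      rw [← Int.modEq_iff_dvd]
      exact (ZMod.intCast_eq_intCast_iff _ _ _).mp h
    obtain ⟨k, hk⟩ := hd
    rcases lt_trichotomy k 0 with hk' | hk' | hk'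
    · nlinarith
    · rw [hk'] at hk; omega
    · nlinarith
  · have h' : ((a : ZMod p)) = (((-b : ℤ) : ZMod p)) := by push_cast; exact h
    have hd : (p : ℤ) ∣ -b - a := by
      rw [← Int.modEq_iff_dvd]
      exact (ZMod.intCast_eq_intCast_iff _ _ _).mp h'
    obtain ⟨k, hk⟩ := hd
    rcases lt_trichotomy k 0 with hk' | hk' | hk'
    · nlinarith
    · rw [hk'] at hk; omega
    · nlinarith

/-- No integer in the range `[1, (p-1)/2]` is divisible by `p`. -/
lemma not_dvd_of_range (p : ℕ) (m b : ℤ) (hm : (p : ℤ) = 2 * m + 1)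
    (hb1 : 1 ≤ b) (hb2 : b ≤ m) (h : ((b : ZMod p)) = 0) : False := by
  have hd : (p : ℤ) ∣ b := (ZMod.intCast_zmod_eq_zero_iff_dvd b p).mp h
  have := Int.le_of_dvd (by omega) hd
  omega

/-- Uniqueness of representatives. -/
lemma uniq_rep (p : ℕ) (hp : p.Prime) (hp5 : 5 ≤ p) (v w w' : ℤ × ℤ)
    (hmem : (∃ x : ℤ, 1 ≤ x ∧ x ≤ ((p : ℤ) - 1) / 2 ∧ w = (x, (p : ℤ))) ∨
      (∃ y : ℤ, 1 ≤ y ∧ y ≤ ((p : ℤ) - 1) / 2 ∧ w = (1, y)))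
    (hmem' : (∃ x : ℤ, 1 ≤ x ∧ x ≤ ((p : ℤ) - 1) / 2 ∧ w' = (x, (p : ℤ))) ∨
      (∃ y : ℤ, 1 ≤ y ∧ y ≤ ((p : ℤ) - 1) / 2 ∧ w' = (1, y)))
    (h : Gamma1CuspEquiv p v w) (h' : Gamma1CuspEquiv p v w') : w = w' := by
  have hodd : p % 2 = 1 := Nat.odd_iff.mp (hp.odd_of_ne_two (by omega))
  set m : ℤ := ((p : ℤ) - 1) / 2 with hmdef
  have hm : (p : ℤ) = 2 * m + 1 := by omega
  obtain ⟨σ, hσ, hs2, hs1⟩ := invariant p v w h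
  obtain ⟨σ', hσ', hs2', hs1'⟩ := invariant p v w' h'
  have hσσ : σ * σ = 1 := by rcases hσ with rfl | rfl <;> ring
  have hσσ' : σ' * σ' = 1 := by rcases hσ' with rfl | rfl <;> ring
  have hp0 : ((p : ℤ) : ZMod p) = 0 := by push_cast; exact ZMod.natCast_self p
  rcases hmem with ⟨x₁, hx11, hx12, rfl⟩ | ⟨y₁, hy11, hy12, rfl⟩ <;>
    rcases hmem' with ⟨x₂, hx21, hx22, rfl⟩ | ⟨y₂, hy21, hy22, rfl⟩
  · -- both of the form (x, p)
    simp only [Prod.fst, Prod.snd] at hs1 hs2 hs1' hs2'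
    have hv2 : ((v.2 : ZMod p)) = 0 := by
      have h0 : σ * ((p : ℤ) : ZMod p) = σ * (σ * ((v.2 : ZMod p))) := by rw [hs2]
      rw [hp0, mul_zero, ← mul_assoc, hσσ, one_mul] at h0
      exact h0.symm
    have e1 := hs1 hv2
    have e2 := hs1' hv2
    have : x₁ = x₂ := by
      apply range_lemma p m x₁ x₂ hm hx11 hx12 hx21 hx22
      rcases hσ with rfl | rfl <;> rcases hσ' with rfl | rfl
      · left; rw [e1, e2] <;> ring
      · right; rw [e1, e2] <;> ring
      · right; rw [e1, e2] <;> ring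
      · left; rw [e1, e2] <;> ring
    rw [this]
  · -- (x₁, p) and (1, y₂) : impossible
    exfalso
    simp only [Prod.fst, Prod.snd] at hs2 hs2'
    have hv2 : ((v.2 : ZMod p)) = 0 := by
      have h0 : σ * ((p : ℤ) : ZMod p) = σ * (σ * ((v.2 : ZMod p))) := by rw [hs2]
      rw [hp0, mul_zero, ← mul_assoc, hσσ, one_mul] at h0
      exact h0.symm
    have : ((y₂ : ZMod p)) = 0 := by rw [hs2', hv2, mul_zero]
    exact not_dvd_of_range p m y₂ hm hy21 hy22 this
  · -- (1, y₁) and (x₂, p) : impossible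
    exfalso
    simp only [Prod.fst, Prod.snd] at hs2 hs2'
    have hv2 : ((v.2 : ZMod p)) = 0 := by
      have h0 : σ' * ((p : ℤ) : ZMod p) = σ' * (σ' * ((v.2 : ZMod p))) := by rw [hs2']
      rw [hp0, mul_zero, ← mul_assoc, hσσ', one_mul] at h0
      exact h0.symm
    have : ((y₁ : ZMod p)) = 0 := by rw [hs2, hv2, mul_zero]
    exact not_dvd_of_range p m y₁ hm hy11 hy12 this
  · -- both of the form (1, y)
    simp only [Prod.fst, Prod.snd] at hs2 hs2'
    have : y₁ = y₂ := by
      apply range_lemma p m y₁ y₂ hm hy11 hy12 hy21 hy22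
      rcases hσ with rfl | rfl <;> rcases hσ' with rfl | rfl
      · left; rw [hs2, hs2'] <;> ring
      · right; rw [hs2, hs2'] <;> ring
      · right; rw [hs2, hs2'] <;> ring
      · left; rw [hs2, hs2'] <;> ring
    rw [this]

end Aux

/-- Let `p ≥ 5` be a prime. The pairs `(x, p)` for `1 ≤ x ≤ (p−1)/2` together
with the pairs `(1, y)` for `1 ≤ y ≤ (p−1)/2` form a complete and irredundant set of
representatives for the `Γ₁(p)`-cusp-equivalence classes of primitive pairs: every
primitive pair in `ℤ²` is `Γ₁(p)`-cusp-equivalent to exactly one pair from this list. -/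
theorem stmt_5 (p : ℕ) (hp : p.Prime) (hp5 : 5 ≤ p) :
    ∀ v : ℤ × ℤ, Primitive v →
      ∃! w : ℤ × ℤ,
        ((∃ x : ℤ, 1 ≤ x ∧ x ≤ ((p : ℤ) - 1) / 2 ∧ w = (x, (p : ℤ))) ∨
          (∃ y : ℤ, 1 ≤ y ∧ y ≤ ((p : ℤ) - 1) / 2 ∧ w = (1, y))) ∧
        Gamma1CuspEquiv p v w := by
  rintro ⟨x, y⟩ hv
  have hv' : IsCoprime x y := hv
  have hodd : p % 2 = 1 := Nat.odd_iff.mp (hp.odd_of_ne_two (by omega))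
  set m : ℤ := ((p : ℤ) - 1) / 2 with hmdef
  have hm : (p : ℤ) = 2 * m + 1 := by omega
  have hpne : (p : ℤ) ≠ 0 := by omega
  have hppos : (0 : ℤ) < (p : ℤ) := by omega
  -- It suffices to exhibit one representative; uniqueness is `uniq_rep`.
  suffices hex : ∃ w : ℤ × ℤ,
      ((∃ a : ℤ, 1 ≤ a ∧ a ≤ ((p : ℤ) - 1) / 2 ∧ w = (a, (p : ℤ))) ∨
        (∃ b : ℤ, 1 ≤ b ∧ b ≤ ((p : ℤ) - 1) / 2 ∧ w = (1, b))) ∧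
      Gamma1CuspEquiv p (x, y) w by
    obtain ⟨w, hw1, hw2⟩ := hex
    exact ⟨w, ⟨hw1, hw2⟩, fun w' hw' => uniq_rep p hp hp5 (x, y) w' w hw'.1 hw1 hw'.2 hw2⟩
  by_cases hdvd : (p : ℤ) ∣ y
  · -- case p ∣ y : representative (±x mod p, p)
    have hpx : ¬ (p : ℤ) ∣ x := by
      intro h
      exact (int_prime p hp).not_unit (hv'.isUnit_of_dvd' h hdvd)
    set r : ℤ := x % (p : ℤ) with hrdef
    have hr0 : 0 ≤ r := Int.emod_nonneg x hpne
    have hrp : r < (p : ℤ) := Int.emod_lt_of_pos x hppos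
    have hrx : r ≡ x [ZMOD (p : ℤ)] := Int.emod_emod_of_dvd x dvd_rfl
    have hxr : (p : ℤ) ∣ x - r := ⟨x / (p : ℤ), by
      have := Int.mul_ediv_add_emod x (p : ℤ); linarith⟩
    have hrne : r ≠ 0 := by
      intro h0
      exact hpx (by simpa [h0] using hxr)
    have hpr : ¬ (p : ℤ) ∣ r := by
      intro h
      have h2 : (p : ℤ) ∣ (x - r) + r := dvd_add hxr h
      simp only [sub_add_cancel] at h2
      exact hpx h2
    have hpy : (p : ℤ) ≡ y [ZMOD (p : ℤ)] := by
      rw [Int.modEq_iff_dvd]; exact dvd_sub hdvd dvd_rfl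
    by_cases hrm : r ≤ m
    · refine ⟨(r, (p : ℤ)), Or.inl ⟨r, by omega, hrm, rfl⟩, ?_⟩
      exact key_equiv p hp x y r (p : ℤ) hv'
        ((coprime_of_not_dvd p hp r hpr))
        hpy (fun _ => hrx)
    · have h1 : Gamma1CuspEquiv p (x, y) (r - (p : ℤ), -(p : ℤ)) := by
        apply key_equiv p hp x y (r - (p : ℤ)) (-(p : ℤ)) hv'
        · have : ¬ (p : ℤ) ∣ r - (p : ℤ) := by
            intro h
            exact hpr (by simpa using dvd_add h (dvd_refl (p : ℤ)))
          exact (coprime_of_not_dvd p hp _ this).neg_right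
        · rw [Int.modEq_iff_dvd]
          have he : y - -(p : ℤ) = y + (p : ℤ) := by ring
          rw [he]
          exact dvd_add hdvd dvd_rfl
        · intro _
          rw [Int.modEq_iff_dvd]
          have : x - (r - (p : ℤ)) = (x - r) + (p : ℤ) := by ring
          rw [this]
          exact dvd_add hxr dvd_rfl
      have h2 := h1.neg
      have h3 : (-(r - (p : ℤ)), -(-(p : ℤ))) = ((p : ℤ) - r, (p : ℤ)) := by
        rw [Prod.mk.injEq]; constructor <;> ring
      rw [h3] at h2
      exact ⟨((p : ℤ) - r, (p : ℤ)), Or.inl ⟨(p : ℤ) - r, by omega, by omega, rfl⟩, h2⟩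
  · -- case p ∤ y : representative (1, ±y mod p)
    set r : ℤ := y % (p : ℤ) with hrdef
    have hr0 : 0 ≤ r := Int.emod_nonneg y hpne
    have hrp : r < (p : ℤ) := Int.emod_lt_of_pos y hppos
    have hry : r ≡ y [ZMOD (p : ℤ)] := Int.emod_emod_of_dvd y dvd_rfl
    have hyr : (p : ℤ) ∣ y - r := ⟨y / (p : ℤ), by
      have := Int.mul_ediv_add_emod y (p : ℤ); linarith⟩
    have hrne : r ≠ 0 := by
      intro h0
      exact hdvd (by simpa [h0] using hyr)
    by_cases hrm : r ≤ m
    · refine ⟨(1, r), Or.inr ⟨r, by omega, hrm, rfl⟩, ?_⟩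
      exact key_equiv p hp x y 1 r hv' (isCoprime_one_left) hry
        (fun h => absurd h hdvd)
    · have h1 : Gamma1CuspEquiv p (x, y) (-1, r - (p : ℤ)) := by
        apply key_equiv p hp x y (-1) (r - (p : ℤ)) hv'
        · exact (isCoprime_one_left).neg_left
        · rw [Int.modEq_iff_dvd]
          have : y - (r - (p : ℤ)) = (y - r) + (p : ℤ) := by ring
          rw [this]
          exact dvd_add hyr dvd_rfl
        · intro h; exact absurd h hdvd
      have h2 := h1.neg
      have h3 : (-(-1 : ℤ), -(r - (p : ℤ))) = ((1 : ℤ), (p : ℤ) - r) := by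
        rw [Prod.mk.injEq]; constructor <;> ring
      rw [h3] at h2
      exact ⟨((1 : ℤ), (p : ℤ) - r), Or.inr ⟨(p : ℤ) - r, by omega, by omega, rfl⟩, h2⟩
end

section
/- Let p ≥ 5 be a prime, let 1 ≤ x ≤ (p−1)/2, and let d ∈ ℤ with gcd(d, x·p) = 1. Then the primitive pair (x, d·p) is Γ₁(p)-cusp-equivalent to (x, p). In other words, the Galois substitution σ_d : [x:y] ↦ [x:dy] fixes each of the (p−1)/2 ∞-cusps of X₁(p). -/
/-- Let `p ≥ 5` be a prime, let `1 ≤ x ≤ (p−1)/2`, and let `d ∈ ℤ` with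
`gcd(d, x·p) = 1`. Then the primitive pair `(x, d·p)` is `Γ₁(p)`-cusp-equivalent to
`(x, p)`. In other words, the Galois substitution `σ_d : [x:y] ↦ [x:dy]` fixes each of the
`(p−1)/2` ∞-cusps of `X₁(p)`. -/
theorem stmt_6 (p : ℕ) (hp : p.Prime) (hp5 : 5 ≤ p)
    (x : ℤ) (hx1 : 1 ≤ x) (hx2 : x ≤ ((p : ℤ) - 1) / 2)
    (d : ℤ) (hd : IsCoprime d (x * (p : ℤ))) :
    Gamma1CuspEquiv p (x, d * (p : ℤ)) (x, (p : ℤ)) := by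
  have hdx : IsCoprime d x := hd.of_mul_right_left
  obtain ⟨u, v, hu⟩ := hdx
  -- x is coprime to p
  have hxltp : x < (p : ℤ) := by omega
  have hpz : Prime (p : ℤ) := by rw [Int.prime_iff_natAbs_prime]; simpa
  have hnd : ¬ (p : ℤ) ∣ x := fun h => by
    have := Int.le_of_dvd (by linarith) h; omega
  have hxp : IsCoprime (p : ℤ) x := (hpz.coprime_iff_not_dvd).mpr hnd
  obtain ⟨w, s, hs⟩ := hxp
  -- hs : w * p + s * x = 1
  set m : ℤ := (u - 1) * w with hm
  set k : ℤ := v - s * (1 - u) * d with hk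
  have hkey : k * x + (1 + (p : ℤ) * m) * d = 1 := by
    simp only [hk, hm]
    linear_combination hu + (u - 1) * d * hs
  refine ⟨k * x + d, m * x, k * (p : ℤ), 1 + (p : ℤ) * m, ?_, ?_, ?_, Or.inl ?_⟩
  · linear_combination hkey
  · exact (Int.modEq_iff_dvd).mpr ⟨-k, by ring⟩
  · exact (Int.modEq_iff_dvd).mpr ⟨-m, by ring⟩
  · simp only [Prod.mk.injEq]
    constructor
    · linear_combination x * hkey
    · linear_combination (p : ℤ) * hkey
end
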